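/- arXiv:1307.7570 — 4 statements merged into one kernel-verified Lean document; each statement's English description precedes it below -/
import Mathlib

section
/- Let F be a p-adic field (a finite extension of ℚ_p for some prime p), D a finite-dimensional central division algebra over F, and m ≥ 1. Let X = fromBlocks(0, B, P, 0) ∈ M_{2m}(D) with B, P ∈ M_m(D), and suppose X is semisimple. Then there exist invertible h₁, h₂ ∈ M_m(D), a natural number r with 0 ≤ r ≤ m, and an invertible semisimple A ∈ M_r(D) such that fromBlocks(h₁,0,0,h₂)·X·fromBlocks(h₁,0,0,h₂)⁻¹ = fromBlocks(0, B₀, P₀, 0), where B₀ = fromBlocks(1_r, 0, 0, 0) ∈ M_m(D) and P₀ = fromBlocks(A, 0, 0, 0) ∈ M_m(D) (blocks of sizes r and m−r). -/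
open Matrix

/-- The `F`-linear endomorphism `v ↦ Z · v` of `ι → D` induced by a square matrix `Z`. -/
def Matrix.mulVecEnd (F : Type*) [Field F] {D : Type*} [DivisionRing D] [Algebra F D]
    {ι : Type*} [Fintype ι] (Z : Matrix ι ι D) :
    Module.End F (ι → D) where
  toFun v := Z.mulVec v
  map_add' u v := Matrix.mulVec_add Z u v
  map_smul' a v := by
    ext i
    simp only [Matrix.mulVec, dotProduct, RingHom.id_apply, Pi.smul_apply,
      Finset.smul_sum, mul_smul_comm]

/-- A square matrix over `D` is semisimple (relative to the base field `F`) if the induced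
`F`-linear endomorphism of `ι → D` is semisimple. -/
def Matrix.IsSemisimpleMatrix (F : Type*) [Field F] {D : Type*} [DivisionRing D]
    [Algebra F D] {ι : Type*} [Fintype ι] (Z : Matrix ι ι D) : Prop :=
  (Matrix.mulVecEnd F Z).IsSemisimple

/-!
Semisimplicity of `X` makes `ker X` and `im X` complementary. Since `ker X = ker P × ker B` and
`im X = im B × im P`, this says that the right `D`-vector space `D^m` decomposes both as
`im B ⊕ ker P` and as `im P ⊕ ker B`. Then `B` maps `im P` isomorphically onto `im B`, `P` maps
`im B` isomorphically onto `im P`, and coordinates adapted to the two decompositions turn `B` into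
`diag(1, 0)` and `P` into `diag(A, 0)`, where `A` is the automorphism `P ∘ B` of `im P`.
Finally `P * B` is conjugate to `diag(A, 0)` and is a diagonal block of the semisimple `X ^ 2`,
so `A` is semisimple as the restriction of a semisimple endomorphism to an invariant subspace.
-/

open Module MulOpposite LinearMap

namespace Module.End

theorem IsSemisimple.isCompl_ker_range {K V : Type*} [Field K] [AddCommGroup V] [Module K V]
    [FiniteDimensional K V] {f : End K V} (hf : f.IsSemisimple) :
    IsCompl (ker f) (range f) := by
  have hker : ker f ∈ f.invtSubmodule := fun x hx => by simp_all
  obtain ⟨W, hW, hcompl⟩ := isSemisimple_iff.mp hf _ hker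
  have hrange : range f ≤ W := by
    rintro _ ⟨x, rfl⟩
    obtain ⟨k, hk, w, hw, rfl⟩ :=
      Submodule.mem_sup.mp (hcompl.sup_eq_top ▸ Submodule.mem_top (x := x))
    rw [map_add, mem_ker.mp hk, zero_add]
    exact hW hw
  refine (Submodule.isCompl_iff_disjoint _ _ ?_).mpr (hcompl.disjoint.mono_right hrange)
  rw [← f.finrank_range_add_finrank_ker, add_comm]

theorem IsSemisimple.of_injective {R V W : Type*} [CommRing R] [AddCommGroup V] [Module R V]
    [AddCommGroup W] [Module R W] {f : End R V} {g : End R W} (hf : f.IsSemisimple)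
    (i : W →ₗ[R] V) (hi : Function.Injective i) (hfg : f ∘ₗ i = i ∘ₗ g) : g.IsSemisimple := by
  have hinv : range i ∈ f.invtSubmodule := by
    rintro _ ⟨w, rfl⟩
    exact ⟨g w, (LinearMap.congr_fun hfg w).symm⟩
  refine (LinearEquiv.isSemisimple_iff g _ (LinearEquiv.ofInjective i hi) ?_).mpr
    (hf.restrict hinv)
  ext w
  exact (LinearMap.congr_fun hfg w).symm

theorem exists_prod_normal_form {R V X Y : Type*} [Ring R] [AddCommGroup V] [Module R V]
    [AddCommGroup X] [Module R X] [AddCommGroup Y] [Module R Y] (b p : End R V)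
    (hbp : IsCompl (range b) (ker p)) (hpb : IsCompl (range p) (ker b))
    (eX : range p ≃ₗ[R] X) (eY : ker b ≃ₗ[R] Y) (eY' : ker p ≃ₗ[R] Y) :
    ∃ (g₁ g₂ : V ≃ₗ[R] X × Y) (a : X ≃ₗ[R] X), ∀ x y,
      g₁ (b (g₂.symm (x, y))) = (x, 0) ∧ g₂ (p (g₁.symm (x, y))) = (a x, 0) := by
  let β := b.kerComplementEquivRange hpb
  let π := p.kerComplementEquivRange hbp
  refine ⟨(Submodule.prodEquivOfIsCompl _ _ hbp).symm.trans ((β.symm.trans eX).prodCongr eY'),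
    (Submodule.prodEquivOfIsCompl _ _ hpb).symm.trans (eX.prodCongr eY),
    eX.symm.trans (β.trans (π.trans eX)), fun x y => ⟨?_, ?_⟩⟩
  · have : b (eX.symm x + eY.symm y : V) = β (eX.symm x) := by
      simp [β, mem_ker.mp (eY.symm y).2]
    simp [Submodule.coe_prodEquivOfIsCompl', this]
  · have : p (β (eX.symm x) + eY'.symm y : V) = π (β (eX.symm x)) := by
      simp [π, mem_ker.mp (eY'.symm y).2]
    simp [Submodule.coe_prodEquivOfIsCompl', this]

end Module.End

instance MulOpposite.module_finite_self (D : Type*) [DivisionRing D] : Module.Finite Dᵐᵒᵖ D :=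
  .equiv (opLinearEquiv Dᵐᵒᵖ).symm

theorem finrank_mulOpposite_pi (D ι : Type*) [DivisionRing D] [Fintype ι] :
    finrank Dᵐᵒᵖ (ι → D) = Fintype.card ι := by
  rw [finrank_pi_fintype, (opLinearEquiv Dᵐᵒᵖ : D ≃ₗ[Dᵐᵒᵖ] Dᵐᵒᵖ).finrank_eq]
  simp

namespace Matrix

section MulVec

variable {D ι : Type*} [Semiring D] [Fintype ι] [DecidableEq ι]

/-- Columns `ι → D` form a right `D`-module, i.e. a `Dᵐᵒᵖ`-module, on which matrices act
`Dᵐᵒᵖ`-linearly from the left. -/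
noncomputable def mulVecRingEquiv : Matrix ι ι D ≃+* Module.End Dᵐᵒᵖ (ι → D) :=
  (RingEquiv.moduleEndSelfOp D).mapMatrix.trans (endVecRingEquivMatrixEnd ι Dᵐᵒᵖ D).symm

@[simp] theorem mulVecRingEquiv_apply (M : Matrix ι ι D) (v : ι → D) :
    mulVecRingEquiv M v = M *ᵥ v := rfl

noncomputable def unitOfLinearEquiv (g : (ι → D) ≃ₗ[Dᵐᵒᵖ] (ι → D)) : (Matrix ι ι D)ˣ :=
  Units.map (mulVecRingEquiv (ι := ι) (D := D)).symm.toMonoidHom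
    (LinearMap.GeneralLinearGroup.ofLinearEquiv g)

@[simp] theorem unitOfLinearEquiv_mulVec (g : (ι → D) ≃ₗ[Dᵐᵒᵖ] (ι → D)) (v : ι → D) :
    (unitOfLinearEquiv g).val *ᵥ v = g v := by
  rw [← mulVecRingEquiv_apply]
  simp [unitOfLinearEquiv]

@[simp] theorem unitOfLinearEquiv_inv_mulVec (g : (ι → D) ≃ₗ[Dᵐᵒᵖ] (ι → D)) (v : ι → D) :
    (unitOfLinearEquiv g)⁻¹.val *ᵥ v = g.symm v := by
  rw [← mulVecRingEquiv_apply]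
  simp [unitOfLinearEquiv]
  rfl

theorem unitOfLinearEquiv_mul_mul_inv_eq {g₁ g₂ : (ι → D) ≃ₗ[Dᵐᵒᵖ] (ι → D)}
    {M N : Matrix ι ι D} (h : ∀ v, g₁ (M *ᵥ g₂.symm v) = N *ᵥ v) :
    (unitOfLinearEquiv g₁).val * M * (unitOfLinearEquiv g₂)⁻¹.val = N :=
  mulVecRingEquiv.injective <| LinearMap.ext fun v => by
    simp only [map_mul, Module.End.mul_apply, mulVecRingEquiv_apply, unitOfLinearEquiv_mulVec,
      unitOfLinearEquiv_inv_mulVec, h]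

end MulVec

section Blocks

variable {D ι κ₁ κ₂ : Type*} [Semiring D]

def blockEquiv (R : Type*) [Semiring R] [Module R D] (e : κ₁ ⊕ κ₂ ≃ ι) :
    ((κ₁ → D) × (κ₂ → D)) ≃ₗ[R] (ι → D) :=
  (LinearEquiv.sumArrowLequivProdArrow κ₁ κ₂ R D).symm.trans (LinearEquiv.funCongrLeft R D e.symm)

@[simp] theorem blockEquiv_apply {R : Type*} [Semiring R] [Module R D] (e : κ₁ ⊕ κ₂ ≃ ι)
    (x : κ₁ → D) (y : κ₂ → D) : blockEquiv R e (x, y) = Sum.elim x y ∘ e.symm := rfl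

theorem reindex_fromBlocks_mulVec [Fintype ι] [Fintype κ₁] [Fintype κ₂] (e : κ₁ ⊕ κ₂ ≃ ι)
    (A : Matrix κ₁ κ₁ D) (C : Matrix κ₂ κ₂ D) (x : κ₁ → D) (y : κ₂ → D) :
    reindex e e (fromBlocks A 0 0 C) *ᵥ (Sum.elim x y ∘ e.symm) =
      Sum.elim (A *ᵥ x) (C *ᵥ y) ∘ e.symm := by
  rw [reindex_apply, submatrix_mulVec_equiv, Equiv.symm_symm, Function.comp_assoc,
    e.symm_comp_self, Function.comp_id, fromBlocks_mulVec]
  simp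

end Blocks

theorem exists_units_mul_mul_inv_eq_reindex_fromBlocks {D ι κ₁ κ₂ : Type*} [DivisionRing D]
    [Fintype ι] [DecidableEq ι] [Fintype κ₁] [DecidableEq κ₁] [Fintype κ₂]
    (B P : Matrix ι ι D) (e : κ₁ ⊕ κ₂ ≃ ι)
    (hBP : IsCompl (range (mulVecRingEquiv B)) (ker (mulVecRingEquiv P)))
    (hPB : IsCompl (range (mulVecRingEquiv P)) (ker (mulVecRingEquiv B)))
    (hrank : finrank Dᵐᵒᵖ (range (mulVecRingEquiv P)) = Fintype.card κ₁) :
    ∃ (h₁ h₂ : (Matrix ι ι D)ˣ) (A : Matrix κ₁ κ₁ D), IsUnit A ∧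
      h₁.val * B * (h₂⁻¹).val = reindex e e (fromBlocks 1 0 0 0) ∧
      h₂.val * P * (h₁⁻¹).val = reindex e e (fromBlocks A 0 0 0) := by
  have hcard : Fintype.card ι = Fintype.card κ₁ + Fintype.card κ₂ := by
    rw [← Fintype.card_sum, Fintype.card_congr e]
  have hdim := finrank_mulOpposite_pi D ι
  obtain ⟨eX⟩ := FiniteDimensional.nonempty_linearEquiv_of_finrank_eq
    (hrank.trans (finrank_mulOpposite_pi D κ₁).symm)
  obtain ⟨eY⟩ := FiniteDimensional.nonempty_linearEquiv_of_finrank_eq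
    (M := ker (mulVecRingEquiv B)) (M' := κ₂ → D) (by
      have := Submodule.finrank_add_eq_of_isCompl hPB
      rw [finrank_mulOpposite_pi]; omega)
  obtain ⟨eY'⟩ := FiniteDimensional.nonempty_linearEquiv_of_finrank_eq
    (M := ker (mulVecRingEquiv P)) (M' := κ₂ → D) (by
      have := (mulVecRingEquiv P).finrank_range_add_finrank_ker
      rw [finrank_mulOpposite_pi]; omega)
  obtain ⟨g₁, g₂, a, h⟩ := Module.End.exists_prod_normal_form _ _ hBP hPB eX eY eY'
  simp only [mulVecRingEquiv_apply] at h
  set c := blockEquiv Dᵐᵒᵖ (D := D) e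
  refine ⟨unitOfLinearEquiv (g₁.trans c), unitOfLinearEquiv (g₂.trans c), unitOfLinearEquiv a,
    Units.isUnit _, unitOfLinearEquiv_mul_mul_inv_eq fun v => ?_,
    unitOfLinearEquiv_mul_mul_inv_eq fun v => ?_⟩
  all_goals
    obtain ⟨⟨x, y⟩, rfl⟩ := c.surjective v
    simp only [LinearEquiv.trans_symm, LinearEquiv.trans_apply, LinearEquiv.symm_apply_apply]
  · rw [(h x y).1, blockEquiv_apply, blockEquiv_apply, reindex_fromBlocks_mulVec, one_mulVec,
      zero_mulVec]
  · rw [(h x y).2, blockEquiv_apply, blockEquiv_apply, reindex_fromBlocks_mulVec,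
      unitOfLinearEquiv_mulVec, zero_mulVec]

section Semisimple

variable {F D ι : Type*} [Field F] [DivisionRing D] [Algebra F D] [Fintype ι]

@[simp] theorem mulVecEnd_apply (M : Matrix ι ι D) (v : ι → D) : mulVecEnd F M v = M *ᵥ v := rfl

theorem mulVecEnd_mul (M N : Matrix ι ι D) :
    mulVecEnd F (M * N) = mulVecEnd F M * mulVecEnd F N :=
  LinearMap.ext fun v => (mulVec_mulVec v M N).symm

theorem IsSemisimpleMatrix.of_injective {κ : Type*} [Fintype κ] {M : Matrix ι ι D}
    {N : Matrix κ κ D} (hM : M.IsSemisimpleMatrix F) (i : (κ → D) →ₗ[F] (ι → D))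
    (hi : Function.Injective i) (h : ∀ v, M *ᵥ i v = i (N *ᵥ v)) : N.IsSemisimpleMatrix F :=
  Module.End.IsSemisimple.of_injective hM i hi (LinearMap.ext h)

theorem IsSemisimpleMatrix.fromBlocks_swap {B P : Matrix ι ι D}
    (h : (fromBlocks 0 B P 0).IsSemisimpleMatrix F) :
    (fromBlocks 0 P B 0).IsSemisimpleMatrix F :=
  h.of_injective (funLeft F D Sum.swap)
    (funLeft_injective_of_surjective _ _ _ (Equiv.sumComm ι ι).surjective) fun v => by
      ext (i | i) <;> simp [fromBlocks_mulVec, funLeft, Function.comp_def]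

variable [DecidableEq ι]

theorem IsSemisimpleMatrix.of_units_mul_mul_inv_eq {κ₁ κ₂ : Type*} [Fintype κ₁] [Fintype κ₂]
    {M : Matrix ι ι D} (hM : M.IsSemisimpleMatrix F) (G : (Matrix ι ι D)ˣ) (e : κ₁ ⊕ κ₂ ≃ ι)
    {A : Matrix κ₁ κ₁ D} (hG : G.val * M * (G⁻¹).val = reindex e e (fromBlocks A 0 0 0)) :
    A.IsSemisimpleMatrix F := by
  refine hM.of_injective
    (mulVecEnd F (G⁻¹).val ∘ₗ (blockEquiv F e).toLinearMap ∘ₗ LinearMap.inl F _ _) ?_ fun v => ?_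
  · intro u w huw
    simpa [Function.comp_def] using congrArg (fun x => (G.val *ᵥ x) ∘ e ∘ Sum.inl) huw
  · have : M * (G⁻¹).val = (G⁻¹).val * reindex e e (fromBlocks A 0 0 0) := by
      rw [← hG]; simp [mul_assoc]
    show M *ᵥ ((G⁻¹).val *ᵥ blockEquiv F e (v, 0)) = (G⁻¹).val *ᵥ blockEquiv F e (A *ᵥ v, 0)
    rw [mulVec_mulVec, this, ← mulVec_mulVec, blockEquiv_apply, blockEquiv_apply,
      reindex_fromBlocks_mulVec, zero_mulVec]

variable [FiniteDimensional F D]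

theorem IsSemisimpleMatrix.mul_of_fromBlocks {B P : Matrix ι ι D}
    (h : (fromBlocks 0 B P 0).IsSemisimpleMatrix F) : (P * B).IsSemisimpleMatrix F := by
  have hsq : (fromBlocks (B * P) 0 0 (P * B)).IsSemisimpleMatrix F := by
    simpa [IsSemisimpleMatrix, sq, ← mulVecEnd_mul, fromBlocks_multiply] using
      Module.End.IsSemisimple.pow h 2
  refine hsq.of_injective
    ((LinearEquiv.sumArrowLequivProdArrow ι ι F D).symm.toLinearMap ∘ₗ LinearMap.inr F _ _)
    (fun u w huw => by simpa [Function.comp_def] using congrArg (· ∘ Sum.inr) huw) fun v => ?_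
  ext (i | i) <;> simp [fromBlocks_mulVec, Function.comp_def, ← Pi.zero_def]

theorem IsSemisimpleMatrix.of_normal_form {κ₁ κ₂ : Type*} [Fintype κ₁] [DecidableEq κ₁]
    [Fintype κ₂] {B P : Matrix ι ι D} (h : (fromBlocks 0 B P 0).IsSemisimpleMatrix F)
    (h₁ h₂ : (Matrix ι ι D)ˣ) (e : κ₁ ⊕ κ₂ ≃ ι) {A : Matrix κ₁ κ₁ D}
    (hB : h₁.val * B * (h₂⁻¹).val = reindex e e (fromBlocks 1 0 0 0))
    (hP : h₂.val * P * (h₁⁻¹).val = reindex e e (fromBlocks A 0 0 0)) :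
    A.IsSemisimpleMatrix F := by
  refine h.mul_of_fromBlocks.of_units_mul_mul_inv_eq h₂ e ?_
  calc h₂.val * (P * B) * (h₂⁻¹).val
      = (h₂.val * P * (h₁⁻¹).val) * (h₁.val * B * (h₂⁻¹).val) := by simp [Matrix.mul_assoc]
    _ = reindex e e (fromBlocks A 0 0 0) := by
      rw [hP, hB]
      simp [fromBlocks_multiply]

theorem isCompl_range_ker_of_isSemisimpleMatrix_fromBlocks {B P : Matrix ι ι D}
    (h : (fromBlocks 0 B P 0).IsSemisimpleMatrix F) :
    IsCompl (range (mulVecRingEquiv B)) (ker (mulVecRingEquiv P)) := by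
  have hc := Module.End.IsSemisimple.isCompl_ker_range h
  have hX : ∀ x y, fromBlocks 0 B P 0 *ᵥ Sum.elim x y = Sum.elim (B *ᵥ y) (P *ᵥ x) := by
    simp [fromBlocks_mulVec]
  constructor
  · rw [Submodule.disjoint_def]
    rintro _ ⟨w, rfl⟩ hw
    have := Submodule.disjoint_def.mp hc.disjoint (Sum.elim (B *ᵥ w) 0)
      (by simp [hX, show P *ᵥ (B *ᵥ w) = 0 from hw]) ⟨Sum.elim 0 w, by simp [hX]⟩
    simpa using congrArg (· ∘ Sum.inl) this
  · rw [codisjoint_iff, Submodule.eq_top_iff']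
    intro v
    obtain ⟨k, hk, _, ⟨w, rfl⟩, hkw⟩ :=
      Submodule.mem_sup.mp (hc.sup_eq_top ▸ Submodule.mem_top (x := Sum.elim v 0))
    refine Submodule.mem_sup.mpr ⟨B *ᵥ (w ∘ Sum.inr), ⟨_, rfl⟩, k ∘ Sum.inl, ?_, ?_⟩
    · simpa [fromBlocks_mulVec] using congrArg (· ∘ Sum.inr) (mem_ker.mp hk)
    · ext i
      simpa [fromBlocks_mulVec, add_comm] using congrFun hkw (Sum.inl i)

end Semisimple

end Matrix

theorem semisimple_orbit_normal_form_lie_general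
    (F : Type*) [Field F]
    {D : Type*} [DivisionRing D] [Algebra F D] [FiniteDimensional F D]
    {m : ℕ} (B P : Matrix (Fin m) (Fin m) D)
    (hss : Matrix.IsSemisimpleMatrix F (Matrix.fromBlocks 0 B P 0)) :
    ∃ (h₁ h₂ : (Matrix (Fin m) (Fin m) D)ˣ) (r : ℕ) (hr : r ≤ m)
      (A : Matrix (Fin r) (Fin r) D),
        IsUnit A ∧ Matrix.IsSemisimpleMatrix F A ∧
        (let e : Fin r ⊕ Fin (m - r) ≃ Fin m :=
          finSumFinEquiv.trans (finCongr (Nat.add_sub_cancel' hr))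
        Matrix.fromBlocks h₁.val 0 0 h₂.val * Matrix.fromBlocks 0 B P 0 *
            Matrix.fromBlocks (h₁⁻¹).val 0 0 (h₂⁻¹).val =
          Matrix.fromBlocks 0 (Matrix.reindex e e (Matrix.fromBlocks 1 0 0 0))
            (Matrix.reindex e e (Matrix.fromBlocks A 0 0 0)) 0) := by
  set r := finrank Dᵐᵒᵖ (range (mulVecRingEquiv P))
  have hr : r ≤ m := (Submodule.finrank_le _).trans_eq (by simp [finrank_mulOpposite_pi])
  set e := finSumFinEquiv.trans (finCongr (Nat.add_sub_cancel' hr))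
  obtain ⟨h₁, h₂, A, hA, hB, hP⟩ := exists_units_mul_mul_inv_eq_reindex_fromBlocks B P e
    (isCompl_range_ker_of_isSemisimpleMatrix_fromBlocks hss)
    (isCompl_range_ker_of_isSemisimpleMatrix_fromBlocks hss.fromBlocks_swap)
    (Fintype.card_fin r).symm
  refine ⟨h₁, h₂, r, hr, A, hA, hss.of_normal_form h₁ h₂ e hB hP, ?_⟩
  intro _
  rw [← hB, ← hP, fromBlocks_multiply, fromBlocks_multiply]
  simp

/-- Every semisimple anti-block-diagonal element `X = fromBlocks 0 B P 0` of `𝔰(F)` is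
conjugate under `H = GL_m(D) × GL_m(D)` to a normal form `X(A)`, where `A` is an invertible
semisimple matrix of some size `r ≤ m`. -/
theorem semisimple_orbit_normal_form_lie {p : ℕ} [Fact p.Prime]
    (F : Type*) [Field F] [Algebra ℚ_[p] F] [FiniteDimensional ℚ_[p] F]
    {D : Type*} [DivisionRing D] [Algebra F D] [FiniteDimensional F D]
    [Algebra.IsCentral F D]
    {m : ℕ} (hm : 1 ≤ m) (B P : Matrix (Fin m) (Fin m) D)
    (hss : Matrix.IsSemisimpleMatrix F (Matrix.fromBlocks 0 B P 0)) :
    ∃ (h₁ h₂ : (Matrix (Fin m) (Fin m) D)ˣ) (r : ℕ) (hr : r ≤ m)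
      (A : Matrix (Fin r) (Fin r) D),
        IsUnit A ∧ Matrix.IsSemisimpleMatrix F A ∧
        (let e : Fin r ⊕ Fin (m - r) ≃ Fin m :=
          finSumFinEquiv.trans (finCongr (Nat.add_sub_cancel' hr))
        Matrix.fromBlocks h₁.val 0 0 h₂.val * Matrix.fromBlocks 0 B P 0 *
            Matrix.fromBlocks (h₁⁻¹).val 0 0 (h₂⁻¹).val =
          Matrix.fromBlocks 0 (Matrix.reindex e e (Matrix.fromBlocks 1 0 0 0))
            (Matrix.reindex e e (Matrix.fromBlocks A 0 0 0)) 0) :=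
  semisimple_orbit_normal_form_lie_general F B P hss
end

section
/- Let D be a division ring, m ≥ 1, and let r, r' be natural numbers with 0 ≤ r, r' ≤ m. Let A ∈ M_r(D) and A' ∈ M_{r'}(D) be invertible, and set X_A = fromBlocks(0, fromBlocks(1_r,0,0,0), fromBlocks(A,0,0,0), 0) ∈ M_{2m}(D) and similarly X_{A'} (with blocks of sizes r', m−r'). If there exist invertible h₁, h₂ ∈ M_m(D) such that fromBlocks(h₁,0,0,h₂)·X_A·fromBlocks(h₁,0,0,h₂)⁻¹ = X_{A'}, then r = r' and there exists an invertible g ∈ M_r(D) with g·A·g⁻¹ = A'. -/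
/-!
Conjugating `X_A` by `diag(h₁, h₂)` into `X_{A'}` amounts to the two relations
`h₁ P = P' h₂` and `h₂ Â = Â' h₁`, where `P`, `Â` are `1_r` resp. `A` padded by zeros.
Read in blocks, the first relation kills the upper right block of `h₂` and identifies the upper
left blocks of `h₁` and `h₂`; the second kills the lower left block of `h₂` because `A` is
invertible. So `h₂` is block diagonal, its upper left block `g` is an invertible `r' × r` matrix,
whence `r = r'`, and the second relation gives `g A = A' g`.
-/

open Matrix

namespace Matrix

variable {R ι κ ι' κ' n : Type*} [Fintype ι] [Fintype κ] [Fintype ι'] [Fintype κ']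

theorem card_eq_of_mul_eq_one_of_mul_eq_one [Ring R] [InvariantBasisNumber R]
    [DecidableEq ι] [DecidableEq ι'] {a : Matrix ι' ι R} {p : Matrix ι ι' R}
    (hap : a * p = 1) (hpa : p * a = 1) : Fintype.card ι = Fintype.card ι' :=
  card_eq_of_linearEquiv R <| LinearEquiv.ofLinearMap (vecMulLinear p) (vecMulLinear a)
    (LinearMap.ext fun v => by simp [vecMul_vecMul, hap])
    (LinearMap.ext fun v => by simp [vecMul_vecMul, hpa])

variable [Semiring R]

omit [Fintype κ] in
theorem eq_zero_of_mul_eq_zero_of_isUnit [DecidableEq ι] {c : Matrix κ ι R} {A : Matrix ι ι R}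
    (hA : IsUnit A) (hcA : c * A = 0) : c = 0 := by
  obtain ⟨u, rfl⟩ := hA
  calc c = c * u.val * u⁻¹.val := by rw [Matrix.mul_assoc, u.mul_inv, Matrix.mul_one]
    _ = 0 := by rw [hcA, Matrix.zero_mul]

theorem conj_fromBlocks_antidiag_eq_iff [Fintype n] [DecidableEq n] (u v : (Matrix n n R)ˣ)
    (b c b' c' : Matrix n n R) :
    fromBlocks u.val 0 0 v.val * fromBlocks 0 b c 0 * fromBlocks (u⁻¹).val 0 0 (v⁻¹).val =
        fromBlocks 0 b' c' 0 ↔ u * b = b' * v ∧ v * c = c' * u := by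
  simp only [fromBlocks_multiply, Matrix.mul_zero, Matrix.zero_mul, add_zero, zero_add,
    fromBlocks_inj, true_and, and_true, Units.mul_inv_eq_iff_eq_mul]

theorem mul_reindex_eq_reindex_mul_iff [Fintype n] {α β : Type*} [Fintype α] [Fintype β]
    (h k : Matrix n n R) (e : α ≃ n) (e' : β ≃ n) (X : Matrix α α R) (X' : Matrix β β R) :
    h * reindex e e X = reindex e' e' X' * k ↔
      h.submatrix e' e * X = X' * k.submatrix e' e := by
  rw [← (reindex e'.symm e.symm).injective.eq_iff]
  simp only [reindex_apply, Equiv.symm_symm]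
  rw [← submatrix_mul_equiv _ _ _ e, ← submatrix_mul_equiv _ _ _ e']
  simp only [submatrix_submatrix, Equiv.symm_comp_self, submatrix_id_id]

theorem fromBlocks_mul_fromBlocks_zero_eq_iff (a : Matrix ι' ι R) (b : Matrix ι' κ R)
    (c : Matrix κ' ι R) (d : Matrix κ' κ R) (A : Matrix ι ι R) (A' : Matrix ι' ι' R)
    (a' : Matrix ι' ι R) (b' : Matrix ι' κ R) (c' : Matrix κ' ι R) (d' : Matrix κ' κ R) :
    fromBlocks a b c d * (fromBlocks A 0 0 0 : Matrix (ι ⊕ κ) (ι ⊕ κ) R) =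
        (fromBlocks A' 0 0 0 : Matrix (ι' ⊕ κ') (ι' ⊕ κ') R) * fromBlocks a' b' c' d' ↔
      a * A = A' * a' ∧ A' * b' = 0 ∧ c * A = 0 := by
  simp only [fromBlocks_multiply, Matrix.mul_zero, Matrix.zero_mul, add_zero,
    fromBlocks_inj, and_true, eq_comm (a := (0 : Matrix ι' κ R))]

theorem mul_toBlocks₁₁_eq_one_and_toBlocks₁₁_mul_eq_one [DecidableEq ι] [DecidableEq κ]
    [DecidableEq ι'] [DecidableEq κ'] {a : Matrix ι' ι R} {d : Matrix κ' κ R}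
    {P : Matrix (ι ⊕ κ) (ι' ⊕ κ') R} (h₁ : fromBlocks a 0 0 d * P = 1)
    (h₂ : P * fromBlocks a 0 0 d = 1) :
    a * P.toBlocks₁₁ = 1 ∧ P.toBlocks₁₁ * a = 1 := by
  rw [← fromBlocks_toBlocks P, fromBlocks_multiply, ← fromBlocks_one, fromBlocks_inj]
    at h₁ h₂
  simp only [Matrix.mul_zero, Matrix.zero_mul, add_zero, zero_add] at h₁ h₂
  exact ⟨h₁.1, h₂.1⟩

theorem exists_intertwiner_of_mul_reindex_fromBlocks_eq [DecidableEq ι] [DecidableEq κ]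
    [DecidableEq ι'] [DecidableEq κ'] [Fintype n] [DecidableEq n] (u v : (Matrix n n R)ˣ)
    (e : ι ⊕ κ ≃ n) (e' : ι' ⊕ κ' ≃ n) {A : Matrix ι ι R} (hA : IsUnit A)
    (A' : Matrix ι' ι' R)
    (hP : u.val * reindex e e (fromBlocks 1 0 0 0) =
      reindex e' e' (fromBlocks 1 0 0 0) * v.val)
    (hX : v.val * reindex e e (fromBlocks A 0 0 0) =
      reindex e' e' (fromBlocks A' 0 0 0) * u.val) :
    ∃ (g : Matrix ι' ι R) (g' : Matrix ι ι' R),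
      g * g' = 1 ∧ g' * g = 1 ∧ g * A = A' * g := by
  rw [mul_reindex_eq_reindex_mul_iff] at hP hX
  set M := u.val.submatrix e' e
  set N := v.val.submatrix e' e
  rw [← fromBlocks_toBlocks M, ← fromBlocks_toBlocks N,
    fromBlocks_mul_fromBlocks_zero_eq_iff] at hP hX
  simp only [Matrix.mul_one, Matrix.one_mul] at hP
  obtain ⟨hMN, hN₁₂, -⟩ := hP
  obtain ⟨hNA, -, hN₂₁⟩ := hX
  have hN : N = fromBlocks N.toBlocks₁₁ 0 0 N.toBlocks₂₂ := by
    rw [← hN₁₂, ← eq_zero_of_mul_eq_zero_of_isUnit hA hN₂₁, fromBlocks_toBlocks]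
  have hNv : N * v⁻¹.val.submatrix e e' = 1 := by
    rw [submatrix_mul_equiv, v.mul_inv, submatrix_one_equiv]
  have hvN : v⁻¹.val.submatrix e e' * N = 1 := by
    rw [submatrix_mul_equiv, v.inv_mul, submatrix_one_equiv]
  rw [hN] at hNv hvN
  obtain ⟨hgg', hg'g⟩ := mul_toBlocks₁₁_eq_one_and_toBlocks₁₁_mul_eq_one hNv hvN
  exact ⟨N.toBlocks₁₁, _, hgg', hg'g, by rw [hNA, hMN]⟩

theorem exists_conj_eq_reindex_of_mul_eq_one_of_mul_eq_one {D : Type*} [Ring D]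
    [InvariantBasisNumber D] {r r' : ℕ} {A : Matrix (Fin r) (Fin r) D}
    {A' : Matrix (Fin r') (Fin r') D} {g : Matrix (Fin r') (Fin r) D}
    {g' : Matrix (Fin r) (Fin r') D} (hgg' : g * g' = 1) (hg'g : g' * g = 1)
    (hgA : g * A = A' * g) :
    ∃ (hrr : r = r') (u : (Matrix (Fin r) (Fin r) D)ˣ),
      u.val * A * (u⁻¹).val = reindex (finCongr hrr.symm) (finCongr hrr.symm) A' := by
  have hrr : r = r' := by
    simpa using card_eq_of_mul_eq_one_of_mul_eq_one hgg' hg'g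
  subst hrr
  refine ⟨rfl, ⟨g, g', hgg', hg'g⟩, ?_⟩
  simp [hgA, Matrix.mul_assoc, hgg']

end Matrix

theorem normal_form_uniqueness_general {D : Type*} [DivisionRing D] {m r r' : ℕ}
    (hr : r ≤ m) (hr' : r' ≤ m)
    (A : Matrix (Fin r) (Fin r) D) (hA : IsUnit A)
    (A' : Matrix (Fin r') (Fin r') D)
    (h₁ h₂ : (Matrix (Fin m) (Fin m) D)ˣ) :
    let e : Fin r ⊕ Fin (m - r) ≃ Fin m :=
      finSumFinEquiv.trans (finCongr (Nat.add_sub_cancel' hr))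
    let e' : Fin r' ⊕ Fin (m - r') ≃ Fin m :=
      finSumFinEquiv.trans (finCongr (Nat.add_sub_cancel' hr'))
    let XA : Matrix (Fin m ⊕ Fin m) (Fin m ⊕ Fin m) D :=
      Matrix.fromBlocks 0 (Matrix.reindex e e (Matrix.fromBlocks 1 0 0 0))
        (Matrix.reindex e e (Matrix.fromBlocks A 0 0 0)) 0
    let XA' : Matrix (Fin m ⊕ Fin m) (Fin m ⊕ Fin m) D :=
      Matrix.fromBlocks 0 (Matrix.reindex e' e' (Matrix.fromBlocks 1 0 0 0))
        (Matrix.reindex e' e' (Matrix.fromBlocks A' 0 0 0)) 0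
    Matrix.fromBlocks h₁.val 0 0 h₂.val * XA * Matrix.fromBlocks (h₁⁻¹).val 0 0 (h₂⁻¹).val =
        XA' →
      ∃ (hrr : r = r') (g : (Matrix (Fin r) (Fin r) D)ˣ),
        g.val * A * (g⁻¹).val =
          Matrix.reindex (finCongr hrr.symm) (finCongr hrr.symm) A' := by
  intro e e' XA XA' hconj
  obtain ⟨hP, hX⟩ := (conj_fromBlocks_antidiag_eq_iff h₁ h₂ _ _ _ _).1 hconj
  obtain ⟨g, g', hgg', hg'g, hgA⟩ :=
    exists_intertwiner_of_mul_reindex_fromBlocks_eq h₁ h₂ e e' hA A' hP hX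
  exact exists_conj_eq_reindex_of_mul_eq_one_of_mul_eq_one hgg' hg'g hgA

/-- Uniqueness in the normal form `X(A)`: if `fromBlocks h₁ 0 0 h₂` conjugates `X_A` to
`X_{A'}`, then `r = r'` and `A` is conjugate to `A'`. -/
theorem normal_form_uniqueness {D : Type*} [DivisionRing D] {m r r' : ℕ} (hm : 1 ≤ m)
    (hr : r ≤ m) (hr' : r' ≤ m)
    (A : Matrix (Fin r) (Fin r) D) (hA : IsUnit A)
    (A' : Matrix (Fin r') (Fin r') D) (hA' : IsUnit A')
    (h₁ h₂ : (Matrix (Fin m) (Fin m) D)ˣ) :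
    let e : Fin r ⊕ Fin (m - r) ≃ Fin m :=
      finSumFinEquiv.trans (finCongr (Nat.add_sub_cancel' hr))
    let e' : Fin r' ⊕ Fin (m - r') ≃ Fin m :=
      finSumFinEquiv.trans (finCongr (Nat.add_sub_cancel' hr'))
    let XA : Matrix (Fin m ⊕ Fin m) (Fin m ⊕ Fin m) D :=
      Matrix.fromBlocks 0 (Matrix.reindex e e (Matrix.fromBlocks 1 0 0 0))
        (Matrix.reindex e e (Matrix.fromBlocks A 0 0 0)) 0
    let XA' : Matrix (Fin m ⊕ Fin m) (Fin m ⊕ Fin m) D :=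
      Matrix.fromBlocks 0 (Matrix.reindex e' e' (Matrix.fromBlocks 1 0 0 0))
        (Matrix.reindex e' e' (Matrix.fromBlocks A' 0 0 0)) 0
    Matrix.fromBlocks h₁.val 0 0 h₂.val * XA * Matrix.fromBlocks (h₁⁻¹).val 0 0 (h₂⁻¹).val =
        XA' →
      ∃ (hrr : r = r') (g : (Matrix (Fin r) (Fin r) D)ˣ),
        g.val * A * (g⁻¹).val =
          Matrix.reindex (finCongr hrr.symm) (finCongr hrr.symm) A' :=
  normal_form_uniqueness_general hr hr' A hA A' h₁ h₂
end

section
/- Let D be a division ring, m ≥ 1, 0 ≤ r ≤ m, and let A ∈ M_r(D) be invertible. Set X = fromBlocks(0, B₀, P₀, 0) ∈ M_{2m}(D) where B₀ = fromBlocks(1_r, 0, 0, 0) ∈ M_m(D) and P₀ = fromBlocks(A, 0, 0, 0) ∈ M_m(D) (blocks of sizes r and m−r). Then for C, E ∈ M_m(D), written in (r, m−r)-block form as C = fromBlocks(C₁₁, C₁₂, C₂₁, C₂₂) and E = fromBlocks(E₁₁, E₁₂, E₂₁, E₂₂), the matrix Y = fromBlocks(0, C, E, 0) commutes with X if and only if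 C₁₂ = 0, C₂₁ = 0, E₁₂ = 0, E₂₁ = 0, and E₁₁ = C₁₁·A = A·C₁₁. -/
open Matrix

theorem reindex_mul_reindex {D : Type*} [NonUnitalNonAssocSemiring D] {n p : Type*}
    [Fintype n] [Fintype p] [DecidableEq n] [DecidableEq p] (e : n ≃ p)
    (M N : Matrix n n D) :
    (Matrix.reindex e e M) * (Matrix.reindex e e N) = Matrix.reindex e e (M * N) := by
  simp [Matrix.reindex_apply, Matrix.submatrix_mul_equiv]

/-- For `X = fromBlocks 0 B₀ P₀ 0` with `B₀ = diag(1_r, 0)` and `P₀ = diag(A, 0)` (`A`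
invertible), a matrix `Y = fromBlocks 0 C E 0` commutes with `X` iff, in `(r, m−r)`-block
form, `C₁₂ = 0`, `C₂₁ = 0`, `E₁₂ = 0`, `E₂₁ = 0` and `E₁₁ = C₁₁·A = A·C₁₁`. -/
theorem centralizer_of_normal_form {D : Type*} [DivisionRing D] {m r : ℕ} (hm : 1 ≤ m)
    (hr : r ≤ m) (A : (Matrix (Fin r) (Fin r) D)ˣ)
    (C₁₁ : Matrix (Fin r) (Fin r) D) (C₁₂ : Matrix (Fin r) (Fin (m - r)) D)
    (C₂₁ : Matrix (Fin (m - r)) (Fin r) D) (C₂₂ : Matrix (Fin (m - r)) (Fin (m - r)) D)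
    (E₁₁ : Matrix (Fin r) (Fin r) D) (E₁₂ : Matrix (Fin r) (Fin (m - r)) D)
    (E₂₁ : Matrix (Fin (m - r)) (Fin r) D) (E₂₂ : Matrix (Fin (m - r)) (Fin (m - r)) D) :
    let e : Fin r ⊕ Fin (m - r) ≃ Fin m :=
      finSumFinEquiv.trans (finCongr (Nat.add_sub_cancel' hr))
    let B₀ : Matrix (Fin m) (Fin m) D :=
      Matrix.reindex e e (Matrix.fromBlocks 1 0 0 0)
    let P₀ : Matrix (Fin m) (Fin m) D :=
      Matrix.reindex e e (Matrix.fromBlocks A.val 0 0 0)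
    let C : Matrix (Fin m) (Fin m) D :=
      Matrix.reindex e e (Matrix.fromBlocks C₁₁ C₁₂ C₂₁ C₂₂)
    let E : Matrix (Fin m) (Fin m) D :=
      Matrix.reindex e e (Matrix.fromBlocks E₁₁ E₁₂ E₂₁ E₂₂)
    (Matrix.fromBlocks 0 C E 0 * Matrix.fromBlocks 0 B₀ P₀ 0 =
        Matrix.fromBlocks 0 B₀ P₀ 0 * Matrix.fromBlocks 0 C E 0) ↔
      (C₁₂ = 0 ∧ C₂₁ = 0 ∧ E₁₂ = 0 ∧ E₂₁ = 0 ∧ E₁₁ = C₁₁ * A.val ∧ E₁₁ = A.val * C₁₁) := by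
  intro e B₀ P₀ C E
  rw [Matrix.fromBlocks_multiply, Matrix.fromBlocks_multiply, Matrix.fromBlocks_inj]
  simp only [Matrix.mul_zero, Matrix.zero_mul, add_zero, zero_add, and_true, true_and]
  show C * P₀ = B₀ * E ∧ E * B₀ = P₀ * C ↔ _
  simp only [C, P₀, B₀, E, reindex_mul_reindex, (Matrix.reindex e e).injective.eq_iff,
    Matrix.fromBlocks_multiply, Matrix.fromBlocks_inj, Matrix.mul_zero, Matrix.zero_mul,
    add_zero, zero_add, Matrix.mul_one, Matrix.one_mul]
  clear_value B₀ P₀ C E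
  clear B₀ P₀ C E
  constructor
  · rintro ⟨⟨h1, h2, h3, -⟩, h5, h6, h7, -⟩
    have hc21 : C₂₁ = 0 := by
      have h := congrArg (fun M => M * (A⁻¹).val) h3
      simp only [Matrix.mul_assoc, Units.mul_inv, Matrix.mul_one, Matrix.zero_mul] at h
      exact h
    have hc12 : C₁₂ = 0 := by
      have h := congrArg (fun M => (A⁻¹).val * M) h6.symm
      simp only [← Matrix.mul_assoc, Units.inv_mul, Matrix.one_mul, Matrix.mul_zero] at h
      exact h
    exact ⟨hc12, hc21, h2.symm, h7, h1.symm, h5⟩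
  · rintro ⟨hc12, hc21, he12, he21, h5, h6⟩
    subst hc12 hc21 he12 he21
    exact ⟨⟨h5.symm, rfl, Matrix.zero_mul _, trivial⟩, h6, (Matrix.mul_zero _).symm, rfl, trivial⟩
end

section
/- Let F be a p-adic field (a finite extension of ℚ_p for some prime p), D a finite-dimensional central division algebra over F, m ≥ 1, and ε = fromBlocks(1_m, 0, 0, −1_m) ∈ M_{2m}(D). Suppose x = fromBlocks(A, B, P, Q) ∈ M_{2m}(D) is invertible, satisfies ε·x·ε = x⁻¹, and is semisimple. Then the matrices A, Q, B·P, P·B ∈ M_m(D) and fromBlocks(0, B, P, 0) ∈ M_{2m}(D) are all semisimple. -/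
/-! Every element of the subalgebra `F[g]` generated by a semisimple matrix `g` is semisimple,
and `F[g]` contains `g⁻¹ = ε g ε` because the ambient algebra is finite-dimensional. Since `2`
is invertible in `F`, it therefore contains the block-diagonal part
`fromBlocks A 0 0 Q = (g + g⁻¹)/2`, the block-antidiagonal part
`fromBlocks 0 B P 0 = (g - g⁻¹)/2`, and its square `fromBlocks (B * P) 0 0 (P * B)`.
Finally, a squarefree polynomial annihilating a block-diagonal matrix annihilates each diagonal
block, so the diagonal blocks of a semisimple block-diagonal matrix are semisimple. -/

open Matrix

open Polynomial

theorem Units.val_inv_mem_adjoin_singleton {K A : Type*} [Field K] [Ring A] [Algebra K A]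
    [FiniteDimensional K A] (u : Aˣ) : (↑u⁻¹ : A) ∈ Algebra.adjoin K {(u : A)} := by
  set S := Algebra.adjoin K {(u : A)}
  have : IsArtinianRing S := isArtinian_of_tower K inferInstance
  let v : S := ⟨u, Algebra.self_mem_adjoin_singleton K _⟩
  have hv : v ∈ nonZeroDivisors S :=
    comap_nonZeroDivisors_le_of_injective (f := S.val) Subtype.val_injective
      u.isUnit.mem_nonZeroDivisors
  obtain ⟨w, hw⟩ := (IsArtinianRing.isUnit_of_mem_nonZeroDivisors hv).exists_right_inv
  rw [u.inv_eq_of_mul_eq_one_right (congrArg Subtype.val hw)]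
  exact w.2

namespace Matrix

theorem aeval_fromBlocks_zero_zero {R α m n : Type*} [CommSemiring R] [Semiring α] [Algebra R α]
    [Fintype m] [Fintype n] [DecidableEq m] [DecidableEq n]
    (M : Matrix m m α) (N : Matrix n n α) (q : R[X]) :
    aeval (fromBlocks M 0 0 N) q = fromBlocks (aeval M q) 0 0 (aeval N q) := by
  induction q using Polynomial.induction_on' with
  | add p q hp hq => simp [hp, hq, fromBlocks_add]
  | monomial k a => simp [fromBlocks_diagonal_pow, ← Algebra.smul_def, fromBlocks_smul]

section

variable (F : Type*) [Field F] {D : Type*} [DivisionRing D] [Algebra F D]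
  {ι : Type*} [Fintype ι] [DecidableEq ι]

def mulVecEndAlgHom : Matrix ι ι D →ₐ[F] Module.End F (ι → D) where
  toFun := mulVecEnd F
  map_one' := LinearMap.ext fun v => one_mulVec v
  map_mul' Z W := LinearMap.ext fun v => (mulVec_mulVec v Z W).symm
  map_zero' := LinearMap.ext fun v => zero_mulVec v
  map_add' Z W := LinearMap.ext fun v => add_mulVec Z W v
  commutes' c := LinearMap.ext fun v => by
    ext i
    simp [mulVecEnd, algebraMap_eq_diagonal, mulVec_diagonal, Algebra.smul_def]

@[simp]
theorem mulVecEndAlgHom_apply (Z : Matrix ι ι D) : mulVecEndAlgHom F Z = mulVecEnd F Z := rfl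

theorem mulVecEnd_injective : Function.Injective (mulVecEnd F : Matrix ι ι D → _) := by
  intro Z W h
  ext i j
  simpa [mulVecEnd, mulVec_single] using congrFun (LinearMap.congr_fun h (Pi.single j 1)) i

variable {F}

theorem isSemisimpleMatrix_of_squarefree_aeval_eq_zero {Z : Matrix ι ι D} {q : F[X]}
    (hq : Squarefree q) (hZ : aeval Z q = 0) : IsSemisimpleMatrix F Z :=
  Module.End.isSemisimple_of_squarefree_aeval_eq_zero hq <| by
    rw [← mulVecEndAlgHom_apply, aeval_algHom_apply, hZ, map_zero]

variable [FiniteDimensional F D]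

theorem IsSemisimpleMatrix.exists_squarefree_aeval_eq_zero {Z : Matrix ι ι D}
    (hZ : IsSemisimpleMatrix F Z) : ∃ q : F[X], Squarefree q ∧ aeval Z q = 0 := by
  refine ⟨minpoly F (mulVecEnd F Z), hZ.minpoly_squarefree, mulVecEnd_injective F ?_⟩
  rw [← mulVecEndAlgHom_apply, ← aeval_algHom_apply, mulVecEndAlgHom_apply, minpoly.aeval,
    ← mulVecEndAlgHom_apply, map_zero]

theorem IsSemisimpleMatrix.of_mem_adjoin_singleton {Z W : Matrix ι ι D}
    (hZ : IsSemisimpleMatrix F Z) (hW : W ∈ Algebra.adjoin F {Z}) : IsSemisimpleMatrix F W :=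
  Module.End.IsSemisimple.of_mem_adjoin_singleton hZ <| by
    rw [← mulVecEndAlgHom_apply, ← mulVecEndAlgHom_apply, ← AlgHom.map_adjoin_singleton]
    exact Subalgebra.mem_map.mpr ⟨W, hW, rfl⟩

end

theorem IsSemisimpleMatrix.of_fromBlocks_zero_zero {F : Type*} [Field F] {D : Type*}
    [DivisionRing D] [Algebra F D] [FiniteDimensional F D] {m n : Type*} [Fintype m] [Fintype n]
    [DecidableEq m] [DecidableEq n] {M : Matrix m m D} {N : Matrix n n D}
    (h : IsSemisimpleMatrix F (fromBlocks M 0 0 N)) :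
    IsSemisimpleMatrix F M ∧ IsSemisimpleMatrix F N := by
  obtain ⟨q, hq, hMN⟩ := h.exists_squarefree_aeval_eq_zero
  rw [aeval_fromBlocks_zero_zero, ← fromBlocks_zero, fromBlocks_inj] at hMN
  exact ⟨isSemisimpleMatrix_of_squarefree_aeval_eq_zero hq hMN.1,
    isSemisimpleMatrix_of_squarefree_aeval_eq_zero hq hMN.2.2.2⟩

end Matrix

theorem semisimple_blocks_of_mem_G_iota_general {p : ℕ} [Fact p.Prime]
    (F : Type*) [Field F] [Algebra ℚ_[p] F]
    {D : Type*} [DivisionRing D] [Algebra F D] [FiniteDimensional F D]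
    {m : ℕ} (A B P Q : Matrix (Fin m) (Fin m) D)
    (g : (Matrix (Fin m ⊕ Fin m) (Fin m ⊕ Fin m) D)ˣ)
    (hg : g.val = Matrix.fromBlocks A B P Q)
    (hι : Matrix.fromBlocks 1 0 0 (-1) * g.val * Matrix.fromBlocks 1 0 0 (-1) = (g⁻¹).val)
    (hss : Matrix.IsSemisimpleMatrix F g.val) :
    Matrix.IsSemisimpleMatrix F A ∧ Matrix.IsSemisimpleMatrix F Q ∧
      Matrix.IsSemisimpleMatrix F (B * P) ∧ Matrix.IsSemisimpleMatrix F (P * B) ∧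
      Matrix.IsSemisimpleMatrix F (Matrix.fromBlocks 0 B P 0) := by
  have : CharZero F := charZero_of_injective_algebraMap (algebraMap ℚ_[p] F).injective
  set S := Algebra.adjoin F {g.val}
  have hg_mem : g.val ∈ S := Algebra.self_mem_adjoin_singleton F _
  have hginv_mem : (g⁻¹).val ∈ S := g.val_inv_mem_adjoin_singleton
  have hginv : (g⁻¹).val = fromBlocks A (-B) (-P) Q := by
    rw [← hι, hg]
    simp [fromBlocks_multiply]
  have hdiag : fromBlocks A 0 0 Q = (2⁻¹ : F) • (g.val + (g⁻¹).val) := by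
    rw [hg, hginv, fromBlocks_add, fromBlocks_smul]
    simp [← two_smul F, smul_smul]
  have hanti : fromBlocks 0 B P 0 = (2⁻¹ : F) • (g.val - (g⁻¹).val) := by
    rw [hg, hginv, sub_eq_add_neg, fromBlocks_neg, fromBlocks_add, fromBlocks_smul]
    simp [← two_smul F, smul_smul]
  have hdiag_mem : fromBlocks A 0 0 Q ∈ S := hdiag ▸ S.smul_mem (S.add_mem hg_mem hginv_mem) _
  have hanti_mem : fromBlocks 0 B P 0 ∈ S := hanti ▸ S.smul_mem (S.sub_mem hg_mem hginv_mem) _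
  have hsq_mem : fromBlocks (B * P) 0 0 (P * B) ∈ S := by
    simpa [fromBlocks_multiply] using S.mul_mem hanti_mem hanti_mem
  obtain ⟨hA, hQ⟩ := (hss.of_mem_adjoin_singleton hdiag_mem).of_fromBlocks_zero_zero
  obtain ⟨hBP, hPB⟩ := (hss.of_mem_adjoin_singleton hsq_mem).of_fromBlocks_zero_zero
  exact ⟨hA, hQ, hBP, hPB, hss.of_mem_adjoin_singleton hanti_mem⟩

/-- If `x = fromBlocks A B P Q` is an invertible semisimple matrix with
`ε·x·ε = x⁻¹` (where `ε = fromBlocks 1 0 0 (−1)`), then `A`, `Q`, `B·P`, `P·B` and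
`fromBlocks 0 B P 0` are all semisimple. -/
theorem semisimple_blocks_of_mem_G_iota {p : ℕ} [Fact p.Prime]
    (F : Type*) [Field F] [Algebra ℚ_[p] F] [FiniteDimensional ℚ_[p] F]
    {D : Type*} [DivisionRing D] [Algebra F D] [FiniteDimensional F D]
    [Algebra.IsCentral F D]
    {m : ℕ} (hm : 1 ≤ m) (A B P Q : Matrix (Fin m) (Fin m) D)
    (g : (Matrix (Fin m ⊕ Fin m) (Fin m ⊕ Fin m) D)ˣ)
    (hg : g.val = Matrix.fromBlocks A B P Q)
    (hι : Matrix.fromBlocks 1 0 0 (-1) * g.val * Matrix.fromBlocks 1 0 0 (-1) = (g⁻¹).val)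
    (hss : Matrix.IsSemisimpleMatrix F g.val) :
    Matrix.IsSemisimpleMatrix F A ∧ Matrix.IsSemisimpleMatrix F Q ∧
      Matrix.IsSemisimpleMatrix F (B * P) ∧ Matrix.IsSemisimpleMatrix F (P * B) ∧
      Matrix.IsSemisimpleMatrix F (Matrix.fromBlocks 0 B P 0) :=
  semisimple_blocks_of_mem_G_iota_general (p := p) F A B P Q g hg hι hss
end
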